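/- Let H ≥ 2 and let a_0, a_1, b_0, b_1 be sequences of odd length n over Z_H, and let g_0, g_1, f_0, f_1 ∈ Z_n. Let u = I(L^{g_0}(a_0), L^{g_1}(a_1)) and v = I(L^{f_0}(b_0), L^{f_1}(b_1)) be the corresponding interleaved sequences of length 2n. Then for every odd shift τ = 2τ_1 + 1 with 0 ≤ τ_1 < n, the cross-correlation satisfies R_{u,v}(τ) = R_{a_0,b_1}(τ_1 + f_1 − g_0) + R_{a_1,b_0}(τ_1 + 1 + f_0 − g_1), where the shift arguments are taken modulo n. -/

import Mathlib

/-- Cross-correlation of two sequences of length `N` over `ℤ_H`, with `ξ = exp(2πi/H)`. -/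
noncomputable def crossCorr (H N : ℕ) (s t : ZMod N → ZMod H) (τ : ZMod N) : ℂ :=
  ∑ i ∈ Finset.range N,
    Complex.exp (2 * (Real.pi : ℂ) * Complex.I / (H : ℂ)) ^ ((s (i : ZMod N) - t ((i : ZMod N) + τ)).val)

/-- Cross-correlation of two binary sequences of length `N` (an integer). -/
def binCorr (N : ℕ) (s t : ZMod N → ZMod 2) (τ : ZMod N) : ℤ :=
  ∑ i ∈ Finset.range N, (-1 : ℤ) ^ ((s (i : ZMod N) + t ((i : ZMod N) + τ)).val)

/-- Cross-correlation of two quaternary sequences of length `N`, with `ξ = √-1`. -/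
noncomputable def quadCorr (N : ℕ) (s t : ZMod N → ZMod 4) (τ : ZMod N) : ℂ :=
  ∑ i ∈ Finset.range N, Complex.I ^ ((s (i : ZMod N) - t ((i : ZMod N) + τ)).val)

/-- Interleaving `u = I(a, b)`: `u(2i) = a(i)`, `u(2i+1) = b(i)`. -/
def interleaveSeq {H : ℕ} (n : ℕ) (a b : ZMod n → ZMod H) : ZMod (2 * n) → ZMod H :=
  fun k => if k.val % 2 = 0 then a ((k.val / 2 : ℕ) : ZMod n) else b ((k.val / 2 : ℕ) : ZMod n)

/-- The inverse Gray mapping `φ⁻¹ : ℤ₂ × ℤ₂ → ℤ₄`. -/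
def grayInv (a b : ZMod 2) : ZMod 4 :=
  if a = 0 then (if b = 0 then 0 else 1) else (if b = 0 then 3 else 2)

/-- Construction I: the quaternary sequence of length `2n` built from
`a₀, a₁, a₂, a₃` and bits `e₀, e₁, e₂`. -/
def constructionI (n : ℕ) (a0 a1 a2 a3 : ZMod n → ZMod 2)
    (e0 e1 e2 : ZMod 2) : ZMod (2 * n) → ZMod 4 :=
  let lam : ZMod n := (((n + 1) / 2 : ℕ) : ZMod n)
  let c := interleaveSeq n a0 (fun i => e0 + a1 (i + lam))
  let d := interleaveSeq n (fun i => e1 + a2 i) (fun i => e2 + a3 (i + lam))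
  fun i => grayInv (c i) (d i)

/-!
Split the correlation sum of length `2n` by the parity of the index: for an odd shift
`2τ₁ + 1` an even position `2j` of `u` meets the odd position `2(j + τ₁) + 1` of `v`, and an
odd position `2j + 1` meets the even position `2(j + τ₁ + 1)`. The two half-sums are therefore
correlations of the component sequences, and the cyclic shifts `L^g` only move the correlation
shift by `f - g`.
-/

open Finset

theorem Finset.sum_range_two_mul {M : Type*} [AddCommMonoid M] (f : ℕ → M) (n : ℕ) :
    ∑ i ∈ range (2 * n), f i = ∑ j ∈ range n, (f (2 * j) + f (2 * j + 1)) := by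
  induction n with
  | zero => simp
  | succ k ih => rw [mul_add, mul_one, sum_range_succ, sum_range_succ, sum_range_succ, ih, add_assoc]

theorem ZMod.sum_range_natCast {M : Type*} [AddCommMonoid M] (N : ℕ) [NeZero N] (F : ZMod N → M) :
    ∑ i ∈ range N, F i = ∑ x : ZMod N, F x := by
  refine sum_nbij' (fun i => (i : ZMod N)) ZMod.val (fun _ _ => mem_univ _)
    (fun x _ => mem_range.2 x.val_lt) (fun _ hi => ZMod.val_natCast_of_lt (mem_range.1 hi))
    (fun x _ => ZMod.natCast_zmod_val x) (fun _ _ => rfl)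

theorem ZMod.sum_range_natCast_add {M : Type*} [AddCommMonoid M] (N : ℕ) (F : ZMod N → M)
    (g : ZMod N) : ∑ i ∈ range N, F (i + g) = ∑ i ∈ range N, F i := by
  rcases N.eq_zero_or_pos with rfl | hN
  · simp
  · have : NeZero N := ⟨hN.ne'⟩
    rw [ZMod.sum_range_natCast N (fun x => F (x + g)), ZMod.sum_range_natCast N F]
    exact Fintype.sum_equiv (Equiv.addRight g) _ _ fun _ => rfl

theorem crossCorr_shift (H n : ℕ) (a b : ZMod n → ZMod H) (g f τ : ZMod n) :
    crossCorr H n (fun i => a (i + g)) (fun i => b (i + f)) τ = crossCorr H n a b (τ + f - g) := by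
  unfold crossCorr
  set ξ := Complex.exp (2 * (Real.pi : ℂ) * Complex.I / (H : ℂ))
  rw [← ZMod.sum_range_natCast_add n (fun x => ξ ^ (a x - b (x + (τ + f - g))).val) g]
  refine sum_congr rfl fun i _ => ?_
  dsimp only
  congr 4
  ring

section Interleave

variable {H : ℕ} (n : ℕ) (a b : ZMod n → ZMod H)

theorem interleaveSeq_natCast (m : ℕ) :
    interleaveSeq n a b m = if m % 2 = 0 then a (m / 2 : ℕ) else b (m / 2 : ℕ) := by
  rw [interleaveSeq, ZMod.val_natCast, Nat.mod_mod_of_dvd m (dvd_mul_right 2 n),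
    Nat.mod_mul_right_div_self, ZMod.natCast_mod]

theorem interleaveSeq_natCast_two_mul (j : ℕ) : interleaveSeq n a b (2 * j : ℕ) = a j := by
  rw [interleaveSeq_natCast, if_pos (by omega), show 2 * j / 2 = j by omega]

theorem interleaveSeq_natCast_two_mul_add_one (j : ℕ) :
    interleaveSeq n a b (2 * j + 1 : ℕ) = b j := by
  rw [interleaveSeq_natCast, if_neg (by omega), show (2 * j + 1) / 2 = j by omega]

end Interleave

theorem crossCorr_interleaveSeq_odd (H n : ℕ) (a a' b b' : ZMod n → ZMod H) (τ : ℕ) :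
    crossCorr H (2 * n) (interleaveSeq n a a') (interleaveSeq n b b') (2 * τ + 1 : ℕ) =
      crossCorr H n a b' τ + crossCorr H n a' b (τ + 1) := by
  unfold crossCorr
  rw [sum_range_two_mul, sum_add_distrib]
  congr 1 <;> refine sum_congr rfl fun j _ => ?_
  · have hshift : ((2 * j : ℕ) : ZMod (2 * n)) + (2 * τ + 1 : ℕ) = (2 * (j + τ) + 1 : ℕ) := by
      push_cast; ring
    rw [hshift, interleaveSeq_natCast_two_mul, interleaveSeq_natCast_two_mul_add_one]
    push_cast; rfl
  · have hshift : ((2 * j + 1 : ℕ) : ZMod (2 * n)) + (2 * τ + 1 : ℕ) = (2 * (j + τ + 1) : ℕ) := by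
      push_cast; ring
    rw [hshift, interleaveSeq_natCast_two_mul, interleaveSeq_natCast_two_mul_add_one]
    push_cast [add_assoc]; rfl

theorem stmt1_general (H n : ℕ)
    (a0 a1 b0 b1 : ZMod n → ZMod H) (g0 g1 f0 f1 : ZMod n)
    (u v : ZMod (2 * n) → ZMod H)
    (hu : u = interleaveSeq n (fun i => a0 (i + g0)) (fun i => a1 (i + g1)))
    (hv : v = interleaveSeq n (fun i => b0 (i + f0)) (fun i => b1 (i + f1)))
    (τ1 : ℕ) :
    crossCorr H (2 * n) u v ((2 * τ1 + 1 : ℕ) : ZMod (2 * n)) =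
      crossCorr H n a0 b1 ((τ1 : ZMod n) + f1 - g0) +
        crossCorr H n a1 b0 ((τ1 : ZMod n) + 1 + f0 - g1) := by
  rw [hu, hv, crossCorr_interleaveSeq_odd, crossCorr_shift, crossCorr_shift]

theorem stmt1 (H n : ℕ) (hH : 2 ≤ H) (hn : Odd n)
    (a0 a1 b0 b1 : ZMod n → ZMod H) (g0 g1 f0 f1 : ZMod n)
    (u v : ZMod (2 * n) → ZMod H)
    (hu : u = interleaveSeq n (fun i => a0 (i + g0)) (fun i => a1 (i + g1)))
    (hv : v = interleaveSeq n (fun i => b0 (i + f0)) (fun i => b1 (i + f1)))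
    (τ1 : ℕ) (hτ1 : τ1 < n) :
    crossCorr H (2 * n) u v ((2 * τ1 + 1 : ℕ) : ZMod (2 * n)) =
      crossCorr H n a0 b1 ((τ1 : ZMod n) + f1 - g0) +
        crossCorr H n a1 b0 ((τ1 : ZMod n) + 1 + f0 - g1) :=
  stmt1_general H n a0 a1 b0 b1 g0 g1 f0 f1 u v hu hv τ1
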